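/- arXiv:2401.07848 — 3 statements merged into one kernel-verified Lean document; each statement's English description precedes it below -/
import Mathlib

section
/- Let U ⊆ ℝ^n be open and let Γ, Γ̃ encode two smooth connections on U. Then Γ and Γ̃ have the same geodesics if and only if the contorsion K x v w := Γ x v w − Γ̃ x v w is antisymmetric at every point, i.e. K x v w = − K x w v for all x ∈ U and v, w ∈ ℝ^n. -/
/-- `c` is a geodesic of the connection encoded by `Γ`, defined on a nonempty open
interval `I` with values in `U`: it is twice differentiable on `I` and satisfies
`c'' + Γ (c) (c') (c') = 0` on `I`. -/
def IsGeodesic {n : ℕ} (U : Set (Fin n → ℝ))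
    (Γ : (Fin n → ℝ) → (Fin n → ℝ) →L[ℝ] (Fin n → ℝ) →L[ℝ] (Fin n → ℝ))
    (I : Set ℝ) (c : ℝ → Fin n → ℝ) : Prop :=
  IsOpen I ∧ I.Nonempty ∧ I.OrdConnected ∧
  (∀ t ∈ I, c t ∈ U) ∧
  (∀ t ∈ I, DifferentiableAt ℝ c t) ∧
  (∀ t ∈ I, DifferentiableAt ℝ (deriv c) t) ∧
  (∀ t ∈ I, deriv (deriv c) t + Γ (c t) (deriv c t) (deriv c t) = 0)

open Set in
lemma exists_geodesic {n : ℕ} (U : Set (Fin n → ℝ)) (hU : IsOpen U)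
    (Γ : (Fin n → ℝ) → (Fin n → ℝ) →L[ℝ] (Fin n → ℝ) →L[ℝ] (Fin n → ℝ))
    (hΓ : ContDiffOn ℝ (⊤ : ℕ∞) Γ U) {x : Fin n → ℝ} (hx : x ∈ U) (v : Fin n → ℝ) :
    ∃ I c, IsGeodesic U Γ I c ∧ (0 : ℝ) ∈ I ∧ c 0 = x ∧ deriv c 0 = v := by
  set E := (Fin n → ℝ) × (Fin n → ℝ)
  set F : E → E := fun p => (p.2, -(Γ p.1 p.2 p.2)) with hF
  have hΓat : ContDiffAt ℝ 1 Γ x := (hΓ.contDiffAt (hU.mem_nhds hx)).of_le (by simp)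
  have hFat : ContDiffAt ℝ 1 F (x, v) := by
    apply ContDiffAt.prodMk
    · exact contDiffAt_snd
    · exact (((hΓat.comp _ contDiffAt_fst).clm_apply contDiffAt_snd).clm_apply
        contDiffAt_snd).neg
  obtain ⟨f, hf0, ε, hε, hf⟩ := ContDiffAt.exists_forall_mem_closedBall_exists_eq_forall_mem_Ioo_hasDerivAt₀ hFat 0
  have hc0 : ContinuousAt (fun t => (f t).1) 0 := by
    have := (hf 0 (by constructor <;> simpa using hε)).continuousAt
    exact (continuous_fst.continuousAt).comp this
  have hmem : ∀ᶠ t in nhds (0:ℝ), (f t).1 ∈ U :=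
    hc0.eventually_mem (hU.mem_nhds (by simp [hf0, hx]))
  obtain ⟨δ, hδ, hδmem⟩ := Metric.eventually_nhds_iff.mp hmem
  set r := min ε δ with hr
  have hr0 : 0 < r := lt_min hε hδ
  set c : ℝ → Fin n → ℝ := fun t => (f t).1 with hc
  set d : ℝ → Fin n → ℝ := fun t => (f t).2 with hd
  have hrε : r ≤ ε := min_le_left ε δ
  have hrδ : r ≤ δ := min_le_right ε δ
  have hsub : Ioo (-r) r ⊆ Ioo (0 - ε) (0 + ε) :=
    Ioo_subset_Ioo (by linarith) (by linarith)
  have hcd : ∀ t ∈ Ioo (-r) r, HasDerivAt c (d t) t ∧ HasDerivAt d (-(Γ (c t) (d t) (d t))) t := by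
    intro t ht
    have h := hf t (hsub ht)
    exact ⟨h.fst, h.snd⟩
  have hderivc : ∀ t ∈ Ioo (-r) r, deriv c t = d t := fun t ht => ((hcd t ht).1).deriv
  have hEq : ∀ t ∈ Ioo (-r) r, deriv c =ᶠ[nhds t] d := by
    intro t ht
    exact Filter.eventuallyEq_of_mem (isOpen_Ioo.mem_nhds ht) hderivc
  refine ⟨Ioo (-r) r, c, ⟨isOpen_Ioo, ⟨0, by simp [hr0]⟩, ordConnected_Ioo, ?_, ?_, ?_, ?_⟩,
    by simp [hr0], by simp [hc, hf0], ?_⟩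
  · intro t ht
    apply hδmem
    simp only [Real.dist_eq, sub_zero]
    rw [abs_lt]
    obtain ⟨h1, h2⟩ := ht
    constructor <;> linarith
  · exact fun t ht => ((hcd t ht).1).differentiableAt
  · intro t ht
    exact (Filter.EventuallyEq.differentiableAt_iff (hEq t ht)).mpr ((hcd t ht).2).differentiableAt
  · intro t ht
    have : deriv (deriv c) t = deriv d t := (hEq t ht).deriv_eq
    rw [this, ((hcd t ht).2).deriv, hderivc t ht]
    abel
  · rw [hderivc 0 (by simp [hr0])]
    simp [hd, hf0]

/-- Two connections `Γ`, `Γ'` have the same geodesics iff the contorsion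
`K x v w := Γ x v w − Γ' x v w` is antisymmetric at every point of `U`. -/
theorem statement1 {n : ℕ} (U : Set (Fin n → ℝ)) (hU : IsOpen U)
    (Γ Γ' : (Fin n → ℝ) → (Fin n → ℝ) →L[ℝ] (Fin n → ℝ) →L[ℝ] (Fin n → ℝ))
    (hΓ : ContDiffOn ℝ (⊤ : ℕ∞) Γ U) (hΓ' : ContDiffOn ℝ (⊤ : ℕ∞) Γ' U) :
    (∀ (I : Set ℝ) (c : ℝ → Fin n → ℝ), IsGeodesic U Γ I c ↔ IsGeodesic U Γ' I c) ↔
      (∀ x ∈ U, ∀ v w : Fin n → ℝ,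
        Γ x v w - Γ' x v w = -(Γ x w v - Γ' x w v)) := by
  constructor
  · intro h x hx v w
    have key : ∀ y ∈ U, ∀ u, Γ y u u = Γ' y u u := by
      intro y hy u
      obtain ⟨I, c, hg, h0, hc0, hc'⟩ := exists_geodesic U hU Γ hΓ hy u
      have hg' := (h I c).mp hg
      have e1 := hg.2.2.2.2.2.2 0 h0
      have e2 := hg'.2.2.2.2.2.2 0 h0
      rw [hc0, hc'] at e1 e2
      have : Γ y u u = -(deriv (deriv c) 0) := by
        rw [eq_neg_iff_add_eq_zero, add_comm]; exact e1
      rw [this, eq_comm, eq_neg_iff_add_eq_zero, add_comm]; exact e2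
    have h1 := key x hx (v + w)
    have h2 := key x hx v
    have h3 := key x hx w
    simp only [map_add, ContinuousLinearMap.add_apply] at h1
    rw [eq_comm, neg_sub, sub_eq_sub_iff_add_eq_add]
    have : Γ x v v + (Γ x v w + Γ x w v) + Γ x w w
        = Γ' x v v + (Γ' x v w + Γ' x w v) + Γ' x w w := by
      have := h1; abel_nf at this ⊢; linear_combination (norm := abel_nf) this
    funext i
    have c1 := congrFun this i
    have c2 := congrFun h2 i
    have c3 := congrFun h3 i
    simp only [Pi.add_apply] at c1 c2 c3 ⊢
    linarith
  · intro h I c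
    have key : ∀ y ∈ U, ∀ u, Γ y u u = Γ' y u u := by
      intro y hy u
      have h0 := h y hy u u
      apply sub_eq_zero.mp
      funext i
      have := congrFun h0 i
      simp only [Pi.neg_apply, Pi.sub_apply, Pi.zero_apply] at this ⊢
      linarith
    constructor <;> intro hg <;>
      refine ⟨hg.1, hg.2.1, hg.2.2.1, hg.2.2.2.1, hg.2.2.2.2.1, hg.2.2.2.2.2.1,
        fun t ht => ?_⟩
    · rw [← key (c t) (hg.2.2.2.1 t ht)]
      exact hg.2.2.2.2.2.2 t ht
    · rw [key (c t) (hg.2.2.2.1 t ht)]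
      exact hg.2.2.2.2.2.2 t ht
end

section
/- Let H be a complex Hilbert space, R a bounded self-adjoint unitary on H, ρ(X) := R X R, X^+ := R X† R, and J an antiunitary operator on H with R J = −J R. Let ε' ∈ {−1,+1} and let D ∈ B(H) satisfy J D = ε' D J. Let u ∈ B(H) be ρ-unitary (u^+ u = u u^+ = 1) and set û := J u J⁻¹. Assume the order-zero relation [u, J u^+ J⁻¹] = 0 and the twisted first-order relation [D, u†]_ρ · û† = ρ(û†) · [D, u†]_ρ, where [D, x]_ρ := D x − ρ(x) D. Then (û u) D (û u)† = D + A + ε' J A J⁻¹, where A := u [D, u†]_ρ = u (D u† − R u† R D). -/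
open scoped ComplexInnerProductSpace
open ContinuousLinearMap

/-- Twisted fluctuation generated by the conjugate action of a ρ-unitary `u`:
with `û := J u J⁻¹`, under the order-zero and twisted first-order conditions,
`(û u) D (û u)† = D + A + ε' J A J⁻¹` where `A := u [D, u†]_ρ`. -/
theorem statement9 {H : Type*} [NormedAddCommGroup H] [InnerProductSpace ℂ H]
    [CompleteSpace H]
    (R : H →L[ℂ] H) (hR : adjoint R = R) (hR2 : R * R = 1)
    (J : H ≃ₛₗ[starRingEnd ℂ] H) (hJ : ∀ φ ψ : H, ⟪J φ, J ψ⟫ = ⟪ψ, φ⟫)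
    (hRJ : ∀ ψ : H, R (J ψ) = -(J (R ψ)))
    (ε' : ℂ) (hε' : ε' = 1 ∨ ε' = -1)
    (D : H →L[ℂ] H) (hJD : ∀ ψ : H, J (D ψ) = ε' • D (J ψ))
    (u : H →L[ℂ] H)
    (hu : (R * adjoint u * R) * u = 1 ∧ u * (R * adjoint u * R) = 1)
    -- `conjJ X = J X J⁻¹`
    (conjJ : (H →L[ℂ] H) → (H →L[ℂ] H))
    (hconjJ : ∀ (X : H →L[ℂ] H) (ψ : H), conjJ X ψ = J (X (J.symm ψ)))
    -- order-zero condition `[u, J u⁺ J⁻¹] = 0`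
    (hzero : u * conjJ (R * adjoint u * R) = conjJ (R * adjoint u * R) * u)
    -- twisted first-order condition `[D, u†]_ρ û† = ρ(û†) [D, u†]_ρ`
    (hfirst : (D * adjoint u - (R * adjoint u * R) * D) * adjoint (conjJ u) =
        (R * adjoint (conjJ u) * R) * (D * adjoint u - (R * adjoint u * R) * D)) :
    (conjJ u * u) * D * adjoint (conjJ u * u) =
      D + u * (D * adjoint u - (R * adjoint u * R) * D) +
        ε' • conjJ (u * (D * adjoint u - (R * adjoint u * R) * D)) := by

  obtain ⟨hu1, hu2⟩ := hu
  have hmul : ∀ X Y : H →L[ℂ] H, conjJ (X * Y) = conjJ X * conjJ Y := by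
    intro X Y; ext ψ
    simp [hconjJ, ContinuousLinearMap.mul_apply]
  have hone : conjJ (1 : H →L[ℂ] H) = 1 := by
    ext ψ; simp [hconjJ]
  have hadd : ∀ X Y : H →L[ℂ] H, conjJ (X + Y) = conjJ X + conjJ Y := by
    intro X Y; ext ψ; simp [hconjJ]
  have hRc : conjJ R = -R := by
    ext ψ
    have h := hRJ (J.symm ψ)
    rw [J.apply_symm_apply] at h
    rw [hconjJ]
    simp [h]
  have hDc : conjJ D = ε' • D := by
    ext ψ
    rw [hconjJ, hJD, J.apply_symm_apply]
    simp
  have hε2 : ε' * ε' = 1 := by rcases hε' with h | h <;> simp [h]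
  have hadj : ∀ X : H →L[ℂ] H,
      ContinuousLinearMap.adjoint (conjJ X) = conjJ (ContinuousLinearMap.adjoint X) := by
    intro X
    symm
    rw [ContinuousLinearMap.eq_adjoint_iff]
    intro x y
    rw [hconjJ, hconjJ]
    calc ⟪J (ContinuousLinearMap.adjoint X (J.symm x)), y⟫
        = ⟪J (ContinuousLinearMap.adjoint X (J.symm x)), J (J.symm y)⟫ := by
          rw [J.apply_symm_apply]
      _ = ⟪J.symm y, ContinuousLinearMap.adjoint X (J.symm x)⟫ := hJ _ _
      _ = ⟪X (J.symm y), J.symm x⟫ := ContinuousLinearMap.adjoint_inner_right _ _ _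
      _ = ⟪J (J.symm x), J (X (J.symm y))⟫ := (hJ _ _).symm
      _ = ⟪x, J (X (J.symm y))⟫ := by rw [J.apply_symm_apply]
  set v := ContinuousLinearMap.adjoint u with hvdef
  set w := conjJ u with hwdef
  set w' := conjJ v with hw'def
  have hadj_w : ContinuousLinearMap.adjoint w = w' := hadj u
  rw [hadj_w] at hfirst
  have hcRvR : conjJ (R * v * R) = R * w' * R := by
    rw [hmul, hmul, hRc, hw'def]
    noncomm_ring
  rw [hcRvR] at hzero
  have hinv : w * (R * w' * R) = 1 := by
    rw [← hcRvR, hwdef, ← hmul, hu2, hone]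
  have hudv : u * D * v = D + u * (D * v - (R * v * R) * D) := by
    have h : u * D * v = u * (D * v - (R * v * R) * D) + (u * (R * v * R)) * D := by
      noncomm_ring
    rw [h, hu2]
    noncomm_ring
  have hterm1 : w * D * w' = D + ε' • conjJ (u * (D * v - (R * v * R) * D)) := by
    have hD' : D = ε' • conjJ D := by rw [hDc, smul_smul, hε2, one_smul]
    have h1 : w * D * w' = ε' • (w * conjJ D * w') := by
      conv_lhs => rw [hD']
      rw [mul_smul_comm, smul_mul_assoc]
    rw [h1, hwdef, hw'def, ← hmul, ← hmul, hudv, hadd, hDc, smul_add, smul_smul, hε2,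
      one_smul]
  have hterm2 : w * (u * (D * v - (R * v * R) * D)) * w' =
      u * (D * v - (R * v * R) * D) := by
    calc w * (u * (D * v - (R * v * R) * D)) * w'
        = w * (u * ((D * v - (R * v * R) * D) * w')) := by noncomm_ring
      _ = w * (u * ((R * w' * R) * (D * v - (R * v * R) * D))) := by rw [hfirst]
      _ = w * ((u * (R * w' * R)) * (D * v - (R * v * R) * D)) := by noncomm_ring
      _ = w * (((R * w' * R) * u) * (D * v - (R * v * R) * D)) := by rw [hzero]
      _ = (w * (R * w' * R)) * (u * (D * v - (R * v * R) * D)) := by noncomm_ring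
      _ = u * (D * v - (R * v * R) * D) := by rw [hinv, one_mul]
  have hadjwu : ContinuousLinearMap.adjoint (w * u) = v * w' := by
    rw [← ContinuousLinearMap.star_eq_adjoint, star_mul,
      ContinuousLinearMap.star_eq_adjoint, ContinuousLinearMap.star_eq_adjoint,
      hadj_w, hvdef]
  calc (w * u) * D * ContinuousLinearMap.adjoint (w * u)
      = w * (u * D * v) * w' := by rw [hadjwu]; noncomm_ring
    _ = w * (D + u * (D * v - (R * v * R) * D)) * w' := by rw [hudv]
    _ = w * D * w' + w * (u * (D * v - (R * v * R) * D)) * w' := by noncomm_ring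
    _ = (D + ε' • conjJ (u * (D * v - (R * v * R) * D))) +
        u * (D * v - (R * v * R) * D) := by rw [hterm1, hterm2]
    _ = D + u * (D * v - (R * v * R) * D) +
        ε' • conjJ (u * (D * v - (R * v * R) * D)) := by abel
end

section
/- Call a matrix in M₄(ℂ) block diagonal if its (k,l)-entry vanishes whenever one of k, l lies in {0,1} and the other in {2,3}. With T^{ab} := −(i/4)[γ_L^a, γ_L^b] and X^+ := γ^0 X† γ^0, the following hold: (i) every spin representation matrix S = exp((i/2) Σ_{a,b} t_{ab} T^{ab}) with t : Fin 4 → Fin 4 → ℝ is block diagonal; (ii) γ^0 itself is ρ-unitary ((γ^0)^+ γ^0 = γ^0 (γ^0)^+ = I) but not block diagonal. Consequently the set of spin representations of Lorentz transformations is a proper subset of the ρ-unitary matrices in M₄(ℂ). -/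
open Matrix

/-- The chiral Euclidean Dirac matrices on ℝ⁴:
`γ^a = fromBlocks 0 σ^a σ̃^a 0` with `σ^0 = σ̃^0 = I₂`, `σ^j = −iσⱼ`, `σ̃^j = iσⱼ`. -/
noncomputable def γE : Fin 4 → Matrix (Fin 4) (Fin 4) ℂ :=
  ![!![0, 0, 1, 0; 0, 0, 0, 1; 1, 0, 0, 0; 0, 1, 0, 0],
    !![0, 0, 0, -Complex.I; 0, 0, -Complex.I, 0;
       0, Complex.I, 0, 0; Complex.I, 0, 0, 0],
    !![0, 0, 0, -1; 0, 0, 1, 0; 0, 1, 0, 0; -1, 0, 0, 0],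
    !![0, 0, -Complex.I, 0; 0, 0, 0, Complex.I;
       Complex.I, 0, 0, 0; 0, -Complex.I, 0, 0]]

/-- The Lorentzian Dirac matrices: `γ_L^0 = γ^0` and `γ_L^j = i γ^j` for `j = 1,2,3`. -/
noncomputable def γL : Fin 4 → Matrix (Fin 4) (Fin 4) ℂ :=
  ![γE 0, Complex.I • γE 1, Complex.I • γE 2, Complex.I • γE 3]

/-- The Lorentz generators `T^{ab} = −(i/4)[γ_L^a, γ_L^b]`. -/
noncomputable def Tgen (a b : Fin 4) : Matrix (Fin 4) (Fin 4) ℂ :=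
  (-(Complex.I / 4)) • (γL a * γL b - γL b * γL a)

/-- The ρ-adjoint `X⁺ := γ^0 X† γ^0` for the twisted product implemented by `γ^0`. -/
noncomputable def rhoAdj (X : Matrix (Fin 4) (Fin 4) ℂ) : Matrix (Fin 4) (Fin 4) ℂ :=
  γE 0 * Xᴴ * γE 0

/-- A matrix in `M₄(ℂ)` is block diagonal if its `(k,l)` entry vanishes whenever one of
`k, l` lies in `{0,1}` and the other in `{2,3}`. -/
def BlockDiag4 (X : Matrix (Fin 4) (Fin 4) ℂ) : Prop :=
  ∀ k l : Fin 4,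
    (((k : ℕ) < 2 ∧ 2 ≤ (l : ℕ)) ∨ (2 ≤ (k : ℕ) ∧ (l : ℕ) < 2)) → X k l = 0

/-! The blocks `{0,1}` and `{2,3}` are the `±1` eigenspaces of the grading
`P = diag(1,1,-1,-1)`, so a matrix is block diagonal as soon as it commutes with `P`. Every Dirac
matrix is block off-diagonal, i.e. anticommutes with `P`; hence every product of two of them,
every generator `T^{ab}`, every combination of generators and, finally, its exponential
commutes with `P`.

On the other side, `X ↦ X⁺` is an antilinear anti-automorphism fixing each `γ_L^a` and commuting
with `exp`, so `A⁺ = -A` for `A = (i/2) Σ t_{ab} T^{ab}` and `(exp A)⁺ = exp (-A) = (exp A)⁻¹`.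
The matrix `γ^0` is a ρ-unitary involution that is purely off-diagonal. -/

lemma commute_mul_of_mul_eq_neg {R : Type*} [Ring R] {p x y : R} (hx : p * x = -(x * p))
    (hy : p * y = -(y * p)) : Commute p (x * y) := by
  rw [Commute, SemiconjBy, ← mul_assoc, hx, neg_mul, mul_assoc, hy, mul_neg, neg_neg,
    mul_assoc]

lemma Matrix.exp_conj_of_mul_self_eq_one {m : Type*} [Fintype m] [DecidableEq m]
    {J : Matrix m m ℂ} (hJ : J * J = 1) (A : Matrix m m ℂ) :
    NormedSpace.exp (J * A * J) = J * NormedSpace.exp A * J := by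
  simpa only [inv_eq_right_inv hJ] using exp_conj J A ⟨⟨J, J, hJ, hJ⟩, rfl⟩

noncomputable def spinGenerator (t : Fin 4 → Fin 4 → ℝ) : Matrix (Fin 4) (Fin 4) ℂ :=
  (Complex.I / 2) • ∑ a : Fin 4, ∑ b : Fin 4, (t a b : ℂ) • Tgen a b

def IsRhoUnitary (X : Matrix (Fin 4) (Fin 4) ℂ) : Prop :=
  rhoAdj X * X = 1 ∧ X * rhoAdj X = 1

lemma γE_zero_mul_self : γE 0 * γE 0 = 1 := by
  ext i j
  fin_cases i <;> fin_cases j <;> simp [γE, mul_apply, Fin.sum_univ_four, one_apply]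

lemma γE_conjTranspose (a : Fin 4) : (γE a)ᴴ = γE a := by
  ext i j
  fin_cases a <;> fin_cases i <;> fin_cases j <;> simp [γE]

lemma γE_zero_mul_γE_mul_γE_zero {j : Fin 4} (hj : j ≠ 0) : γE 0 * γE j * γE 0 = -γE j := by
  ext k l
  fin_cases j
  · exact absurd rfl hj
  all_goals fin_cases k <;> fin_cases l <;> simp [γE, mul_apply, Fin.sum_univ_four]

noncomputable def blockGrading : Matrix (Fin 4) (Fin 4) ℂ := diagonal ![1, 1, -1, -1]

open CharZero in
lemma blockDiag4_of_commute {X : Matrix (Fin 4) (Fin 4) ℂ} (h : Commute blockGrading X) :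
    BlockDiag4 X := by
  intro k l hkl
  have hkl' := congr_fun₂ h k l
  simp only [blockGrading, diagonal_mul, mul_diagonal] at hkl'
  fin_cases k <;> fin_cases l <;> simp_all

lemma blockGrading_mul_γE (a : Fin 4) : blockGrading * γE a = -(γE a * blockGrading) := by
  ext k l
  fin_cases a <;> fin_cases k <;> fin_cases l <;>
    simp [blockGrading, γE, vecMul, dotProduct, Fin.sum_univ_four]

lemma blockGrading_mul_γL (a : Fin 4) : blockGrading * γL a = -(γL a * blockGrading) := by
  fin_cases a
  · exact blockGrading_mul_γE 0
  all_goals simp [γL, blockGrading_mul_γE]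

lemma commute_blockGrading_Tgen (a b : Fin 4) : Commute blockGrading (Tgen a b) :=
  ((commute_mul_of_mul_eq_neg (blockGrading_mul_γL a) (blockGrading_mul_γL b)).sub_right
    (commute_mul_of_mul_eq_neg (blockGrading_mul_γL b) (blockGrading_mul_γL a))).smul_right _

lemma blockDiag4_exp_spinGenerator (t : Fin 4 → Fin 4 → ℝ) :
    BlockDiag4 (NormedSpace.exp (spinGenerator t)) := by
  refine blockDiag4_of_commute (Commute.exp_right ?_)
  refine (Commute.sum_right _ _ _ fun a _ => Commute.sum_right _ _ _ fun b _ => ?_).smul_right _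
  exact (commute_blockGrading_Tgen a b).smul_right _

lemma not_blockDiag4_γE_zero : ¬ BlockDiag4 (γE 0) := fun h => by
  simpa [γE] using h 0 2 (by decide)

lemma rhoAdj_mul (X Y : Matrix (Fin 4) (Fin 4) ℂ) : rhoAdj (X * Y) = rhoAdj Y * rhoAdj X := by
  simp only [rhoAdj, conjTranspose_mul, mul_assoc, ← mul_assoc (γE 0) (γE 0), γE_zero_mul_self,
    one_mul]

lemma rhoAdj_smul (c : ℂ) (X : Matrix (Fin 4) (Fin 4) ℂ) :
    rhoAdj (c • X) = star c • rhoAdj X := by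
  simp only [rhoAdj, conjTranspose_smul, Matrix.mul_smul, Matrix.smul_mul]

lemma rhoAdj_sub (X Y : Matrix (Fin 4) (Fin 4) ℂ) : rhoAdj (X - Y) = rhoAdj X - rhoAdj Y := by
  simp only [rhoAdj, conjTranspose_sub, sub_mul, mul_sub]

lemma rhoAdj_sum {ι : Type*} (s : Finset ι) (f : ι → Matrix (Fin 4) (Fin 4) ℂ) :
    rhoAdj (∑ i ∈ s, f i) = ∑ i ∈ s, rhoAdj (f i) := by
  simp only [rhoAdj, conjTranspose_sum, Finset.sum_mul, Finset.mul_sum]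

lemma rhoAdj_exp (A : Matrix (Fin 4) (Fin 4) ℂ) :
    rhoAdj (NormedSpace.exp A) = NormedSpace.exp (rhoAdj A) := by
  rw [rhoAdj, rhoAdj, ← exp_conjTranspose, exp_conj_of_mul_self_eq_one γE_zero_mul_self]

lemma rhoAdj_γE_zero : rhoAdj (γE 0) = γE 0 := by
  rw [rhoAdj, γE_conjTranspose, mul_assoc, γE_zero_mul_self, mul_one]

lemma rhoAdj_γL (a : Fin 4) : rhoAdj (γL a) = γL a := by
  fin_cases a
  · exact rhoAdj_γE_zero
  all_goals
    simp [γL, rhoAdj, γE_conjTranspose, γE_zero_mul_γE_mul_γE_zero]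

lemma rhoAdj_Tgen (a b : Fin 4) : rhoAdj (Tgen a b) = Tgen a b := by
  simp only [Tgen, rhoAdj_smul, rhoAdj_sub, rhoAdj_mul, rhoAdj_γL, star_neg, star_div₀,
    Complex.star_def, Complex.conj_I, Complex.conj_ofNat, smul_sub]
  module

lemma rhoAdj_spinGenerator (t : Fin 4 → Fin 4 → ℝ) :
    rhoAdj (spinGenerator t) = -spinGenerator t := by
  simp only [spinGenerator, rhoAdj_smul, rhoAdj_sum, rhoAdj_Tgen, Complex.star_def,
    Complex.conj_ofReal, map_div₀, Complex.conj_I, Complex.conj_ofNat, neg_div, neg_smul]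

lemma isRhoUnitary_exp_of_rhoAdj_eq_neg {A : Matrix (Fin 4) (Fin 4) ℂ} (hA : rhoAdj A = -A) :
    IsRhoUnitary (NormedSpace.exp A) := by
  rw [IsRhoUnitary, rhoAdj_exp, hA, ← exp_add_of_commute _ _ (Commute.refl A).neg_left,
    ← exp_add_of_commute _ _ (Commute.refl A).neg_right, neg_add_cancel, add_neg_cancel,
    NormedSpace.exp_zero, and_self]

lemma isRhoUnitary_γE_zero : IsRhoUnitary (γE 0) := by
  simp only [IsRhoUnitary, rhoAdj_γE_zero, γE_zero_mul_self, and_self]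

/-- Every spin representation of a Lorentz transformation is block diagonal, while
`γ^0` is ρ-unitary but not block diagonal; consequently the spin representations of
Lorentz transformations form a proper subset of the ρ-unitary matrices. -/
theorem statement16 :
    (∀ t : Fin 4 → Fin 4 → ℝ,
      BlockDiag4 (NormedSpace.exp
        ((Complex.I / 2) • ∑ a : Fin 4, ∑ b : Fin 4, (t a b : ℂ) • Tgen a b))) ∧
    (rhoAdj (γE 0) * γE 0 = 1 ∧ γE 0 * rhoAdj (γE 0) = 1 ∧ ¬ BlockDiag4 (γE 0)) ∧
    {S : Matrix (Fin 4) (Fin 4) ℂ |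
        ∃ t : Fin 4 → Fin 4 → ℝ,
          S = NormedSpace.exp
            ((Complex.I / 2) • ∑ a : Fin 4, ∑ b : Fin 4, (t a b : ℂ) • Tgen a b)} ⊂
      {X : Matrix (Fin 4) (Fin 4) ℂ | rhoAdj X * X = 1 ∧ X * rhoAdj X = 1} := by
  refine ⟨blockDiag4_exp_spinGenerator, ⟨isRhoUnitary_γE_zero.1, isRhoUnitary_γE_zero.2,
    not_blockDiag4_γE_zero⟩, (Set.ssubset_iff_of_subset ?_).2 ⟨γE 0, isRhoUnitary_γE_zero, ?_⟩⟩
  · rintro _ ⟨t, rfl⟩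
    exact isRhoUnitary_exp_of_rhoAdj_eq_neg (rhoAdj_spinGenerator t)
  · rintro ⟨t, ht⟩
    exact not_blockDiag4_γE_zero (ht ▸ blockDiag4_exp_spinGenerator t)
end
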